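/- Let a, b be positive integers and s₁, s₂, s₃ real numbers large enough for absolute convergence. Then ζ_{sl(4)}(a,0,s₂,s₁,b,s₃) = ∑_{i=1}^{a} C(a+b−i−1, b−1) ζ_{sl(4)}(i,0,s₂,s₁,0,s₃+a+b−i) + ∑_{i=1}^{b} C(a+b−i−1, a−1) ζ_{sl(4)}(0,0,s₂,s₁,i,s₃+a+b−i). -/

import Mathlib

/-!
Put `u = n₁ + 1` and `v = n₂ + n₃ + 2`, so that `u + v = n₁ + n₂ + n₃ + 3`. The summand on the
left is `1 / (uᵃ vᵇ)` times a factor common to all summands, and the partial-fraction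
decomposition of `1 / (uᵃ vᵇ)` into the terms `1 / (uⁱ (u + v)ᵃ⁺ᵇ⁻ⁱ)` and `1 / (vⁱ (u + v)ᵃ⁺ᵇ⁻ⁱ)`
turns it into the corresponding combination of summands on the right. In the variables
`x = u / (u + v)`, `y = v / (u + v)` that decomposition reads
`(∑_{j < a} C(b-1+j, j) xʲ) yᵇ + (∑_{j < b} C(a-1+j, j) yʲ) xᵃ = 1` for `x + y = 1`, which follows
from Pascal's rule by induction on `a` and `b`. All the series are dominated by
`∏ (nₖ + 1)⁻²`, so the pointwise identity can be summed termwise.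
-/

noncomputable def wittenSl4R (s₁ s₂ s₃ s₄ s₅ s₆ : ℝ) : ℝ :=
  ∑' (n₁ : ℕ) (n₂ : ℕ) (n₃ : ℕ),
    1 / ((n₁ + 1 : ℝ) ^ s₁ * (n₂ + 1 : ℝ) ^ s₂ * (n₃ + 1 : ℝ) ^ s₃ *
      (n₁ + n₂ + 2 : ℝ) ^ s₄ * (n₂ + n₃ + 2 : ℝ) ^ s₅ * (n₁ + n₂ + n₃ + 3 : ℝ) ^ s₆)

open Finset Real

section PartialFractions

variable {R : Type*} [CommRing R]

/-- The `m`-th partial sum of the series `(1 - x)⁻¹ ^ (n + 1) = ∑ C(n + j, j) xʲ`. -/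
def negBinomialPartialSum (n m : ℕ) (x : R) : R :=
  ∑ j ∈ range (m + 1), ((n + j).choose j : R) * x ^ j

lemma negBinomialPartialSum_zero_right (n : ℕ) (x : R) : negBinomialPartialSum n 0 x = 1 := by
  simp [negBinomialPartialSum]

lemma negBinomialPartialSum_zero_left (m : ℕ) (x : R) :
    negBinomialPartialSum 0 m x = ∑ j ∈ range (m + 1), x ^ j := by
  simp [negBinomialPartialSum]

lemma negBinomialPartialSum_succ_succ (n m : ℕ) (x : R) :
    negBinomialPartialSum (n + 1) (m + 1) x =
      x * negBinomialPartialSum (n + 1) m x + negBinomialPartialSum n (m + 1) x := by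
  have pascal : ∀ j, ((n + 1 + (j + 1)).choose (j + 1) : R) =
      (n + 1 + j).choose j + (n + (j + 1)).choose (j + 1) := fun j => by
    rw [show n + 1 + (j + 1) = n + (j + 1) + 1 by omega, Nat.choose_succ_succ',
      show n + (j + 1) = n + 1 + j by omega]
    push_cast; ring
  simp only [negBinomialPartialSum]
  rw [sum_range_succ' _ (m + 1), sum_range_succ' (fun j => ((n + j).choose j : R) * x ^ j),
    mul_sum, ← add_assoc, ← sum_add_distrib]
  congr 1
  · exact sum_congr rfl fun j _ => by rw [pascal]; ring
  · simp

lemma geom_sum_mul_add_pow_eq_one {x y : R} (hxy : x + y = 1) (n : ℕ) :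
    (∑ j ∈ range (n + 1), y ^ j) * x + y ^ (n + 1) = 1 := by
  rw [← sub_eq_iff_eq_add.mpr hxy.symm, ← neg_sub, mul_neg, geom_sum_mul]
  ring

theorem negBinomialPartialSum_mul_add_eq_one {x y : R} (hxy : x + y = 1) (m n : ℕ) :
    negBinomialPartialSum n m x * y ^ (n + 1) + negBinomialPartialSum m n y * x ^ (m + 1) = 1 := by
  induction m generalizing n with
  | zero =>
    rw [negBinomialPartialSum_zero_right, negBinomialPartialSum_zero_left, zero_add, pow_one,
      one_mul, add_comm]
    exact geom_sum_mul_add_pow_eq_one hxy n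
  | succ m ih =>
    induction n with
    | zero =>
      rw [negBinomialPartialSum_zero_right, negBinomialPartialSum_zero_left, zero_add, pow_one,
        one_mul]
      exact geom_sum_mul_add_pow_eq_one ((add_comm y x).trans hxy) (m + 1)
    | succ n ihn =>
      rw [negBinomialPartialSum_succ_succ, negBinomialPartialSum_succ_succ]
      linear_combination x * ih (n + 1) + y * ihn + hxy

end PartialFractions

section Field

variable {K : Type*} [Field K]

lemma sum_Icc_choose_div_pow_mul_pow {u w : K} (hu : u ≠ 0) (hw : w ≠ 0) {a b : ℕ}
    (ha : 1 ≤ a) (hb : 1 ≤ b) :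
    ∑ i ∈ Icc 1 a, ((a + b - i - 1).choose (b - 1) : K) / (u ^ i * w ^ (a + b - i)) =
      negBinomialPartialSum (b - 1) (a - 1) (u / w) / (u ^ a * w ^ b) := by
  obtain ⟨m, rfl⟩ : ∃ m, a = m + 1 := ⟨a - 1, by omega⟩
  obtain ⟨n, rfl⟩ : ∃ n, b = n + 1 := ⟨b - 1, by omega⟩
  rw [negBinomialPartialSum, sum_div]
  refine sum_nbij' (fun i => m + 1 - i) (fun j => m + 1 - j) ?_ ?_ ?_ ?_ ?_
  all_goals try (intro i hi; simp only [mem_Icc, mem_range] at hi ⊢; omega)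
  intro i hi
  simp only [mem_Icc] at hi
  obtain ⟨j, hj⟩ : ∃ j, m + 1 = i + j := ⟨m + 1 - i, by omega⟩
  rw [hj, show i + j + (n + 1) - i - 1 = n + j by omega,
    show i + j + (n + 1) - i = n + 1 + j by omega, show i + j - i = j by omega,
    Nat.add_sub_cancel, Nat.choose_symm_add, div_pow]
  field_simp
  ring

theorem one_div_pow_mul_pow_eq_sum {u v : K} (hu : u ≠ 0) (hv : v ≠ 0) (huv : u + v ≠ 0)
    {a b : ℕ} (ha : 1 ≤ a) (hb : 1 ≤ b) :
    1 / (u ^ a * v ^ b) =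
      (∑ i ∈ Icc 1 a, ((a + b - i - 1).choose (b - 1) : K) / (u ^ i * (u + v) ^ (a + b - i))) +
      (∑ i ∈ Icc 1 b, ((a + b - i - 1).choose (a - 1) : K) / (v ^ i * (u + v) ^ (a + b - i))) := by
  rw [sum_Icc_choose_div_pow_mul_pow hu huv ha hb, add_comm a b,
    sum_Icc_choose_div_pow_mul_pow hv huv hb ha]
  have key := negBinomialPartialSum_mul_add_eq_one
    (x := u / (u + v)) (y := v / (u + v)) (by field_simp) (a - 1) (b - 1)
  rw [Nat.sub_add_cancel ha, Nat.sub_add_cancel hb] at key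
  calc 1 / (u ^ a * v ^ b)
      = (negBinomialPartialSum (b - 1) (a - 1) (u / (u + v)) * (v / (u + v)) ^ b +
          negBinomialPartialSum (a - 1) (b - 1) (v / (u + v)) * (u / (u + v)) ^ a) /
          (u ^ a * v ^ b) := by rw [key]
    _ = _ := by rw [div_pow, div_pow]; field_simp

end Field

noncomputable def wittenSl4RSummand (t₁ t₂ t₃ t₄ t₅ t₆ : ℝ) (p : ℕ × ℕ × ℕ) : ℝ :=
  1 / ((p.1 + 1 : ℝ) ^ t₁ * (p.2.1 + 1 : ℝ) ^ t₂ * (p.2.2 + 1 : ℝ) ^ t₃ *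
    (p.1 + p.2.1 + 2 : ℝ) ^ t₄ * (p.2.1 + p.2.2 + 2 : ℝ) ^ t₅ * (p.1 + p.2.1 + p.2.2 + 3 : ℝ) ^ t₆)

section Summability

variable {t₁ t₂ t₃ t₄ t₅ t₆ : ℝ}

lemma hasSum_wittenSl4RSummand (h : Summable (wittenSl4RSummand t₁ t₂ t₃ t₄ t₅ t₆)) :
    HasSum (wittenSl4RSummand t₁ t₂ t₃ t₄ t₅ t₆) (wittenSl4R t₁ t₂ t₃ t₄ t₅ t₆) := by
  convert h.hasSum using 1
  rw [wittenSl4R, h.tsum_prod]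
  exact tsum_congr fun n₁ => ((h.prod_factor n₁).tsum_prod).symm

lemma sq_le_rpow_of_le {x y t : ℝ} (hx : 1 ≤ x) (hxy : x ≤ y) (ht : 2 ≤ t) : x ^ 2 ≤ y ^ t :=
  calc x ^ 2 ≤ y ^ 2 := pow_le_pow_left₀ (by linarith) hxy 2
    _ = y ^ (2 : ℝ) := (rpow_two y).symm
    _ ≤ y ^ t := rpow_le_rpow_of_exponent_le (hx.trans hxy) ht

lemma wittenSl4RSummand_le (h₁ : 0 ≤ t₁) (h₂ : 0 ≤ t₂) (h₃ : 2 ≤ t₃) (h₄ : 2 ≤ t₄)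
    (h₅ : 0 ≤ t₅) (h₆ : 2 ≤ t₆) (p : ℕ × ℕ × ℕ) :
    wittenSl4RSummand t₁ t₂ t₃ t₄ t₅ t₆ p ≤
      1 / ((p.1 : ℝ) + 1) ^ 2 * (1 / ((p.2.1 : ℝ) + 1) ^ 2 * (1 / ((p.2.2 : ℝ) + 1) ^ 2)) := by
  obtain ⟨n₁, n₂, n₃⟩ := p
  have one_le (n : ℕ) : (1 : ℝ) ≤ n + 1 := by simp
  calc wittenSl4RSummand t₁ t₂ t₃ t₄ t₅ t₆ (n₁, n₂, n₃)
      ≤ 1 / (1 * 1 * ((n₃ : ℝ) + 1) ^ 2 * ((n₁ : ℝ) + 1) ^ 2 * 1 * ((n₂ : ℝ) + 1) ^ 2) := by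
        refine one_div_le_one_div_of_le (by positivity) ?_
        gcongr
        · exact one_le_rpow (one_le n₁) h₁
        · exact one_le_rpow (one_le n₂) h₂
        · exact sq_le_rpow_of_le (one_le n₃) le_rfl h₃
        · exact sq_le_rpow_of_le (one_le n₁) (by linarith [(n₂.cast_nonneg : (0 : ℝ) ≤ n₂)]) h₄
        · exact one_le_rpow (by linarith [(n₃.cast_nonneg : (0 : ℝ) ≤ n₃)]) h₅
        · exact sq_le_rpow_of_le (one_le n₂)
            (by linarith [(n₁.cast_nonneg : (0 : ℝ) ≤ n₁), (n₃.cast_nonneg : (0 : ℝ) ≤ n₃)]) h₆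
    _ = _ := by field_simp

lemma summable_wittenSl4RSummand (h₁ : 0 ≤ t₁) (h₂ : 0 ≤ t₂) (h₃ : 2 ≤ t₃) (h₄ : 2 ≤ t₄)
    (h₅ : 0 ≤ t₅) (h₆ : 2 ≤ t₆) : Summable (wittenSl4RSummand t₁ t₂ t₃ t₄ t₅ t₆) := by
  have hf : Summable fun n : ℕ => 1 / ((n : ℝ) + 1) ^ 2 := by
    exact_mod_cast (summable_nat_add_iff 1).2 (summable_one_div_nat_pow.2 one_lt_two)
  have hf₀ : 0 ≤ fun n : ℕ => 1 / ((n : ℝ) + 1) ^ 2 := fun n => by positivity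
  refine Summable.of_nonneg_of_le (fun p => by unfold wittenSl4RSummand; positivity)
    (wittenSl4RSummand_le h₁ h₂ h₃ h₄ h₅ h₆) ?_
  exact hf.mul_of_nonneg (hf.mul_of_nonneg hf hf₀ hf₀) hf₀ fun q => by positivity

end Summability

lemma wittenSl4RSummand_natCast_exponents (k l e n₁ n₂ n₃ : ℕ) (s₁ s₂ s₃ : ℝ) :
    wittenSl4RSummand k 0 s₂ s₁ l (s₃ + e) (n₁, n₂, n₃) =
      1 / (((n₁ : ℝ) + 1) ^ k * ((n₂ : ℝ) + n₃ + 2) ^ l * ((n₁ + 1) + (n₂ + n₃ + 2)) ^ e) *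
        (1 / (((n₃ : ℝ) + 1) ^ s₂ * ((n₁ : ℝ) + n₂ + 2) ^ s₁ *
          ((n₁ + 1) + (n₂ + n₃ + 2) : ℝ) ^ s₃)) := by
  have hw : ((n₁ : ℝ) + n₂ + n₃ + 3) = (n₁ + 1) + (n₂ + n₃ + 2) := by ring
  simp only [wittenSl4RSummand, hw, rpow_zero, rpow_natCast,
    rpow_add (by positivity : (0 : ℝ) < (n₁ + 1) + (n₂ + n₃ + 2))]
  rw [div_mul_div_comm, mul_one]
  ring

lemma wittenSl4RSummand_eq_sum {a b : ℕ} (ha : 1 ≤ a) (hb : 1 ≤ b) (s₁ s₂ s₃ : ℝ)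
    (p : ℕ × ℕ × ℕ) :
    wittenSl4RSummand a 0 s₂ s₁ b s₃ p =
      (∑ i ∈ Icc 1 a, ((a + b - i - 1).choose (b - 1) : ℝ) *
        wittenSl4RSummand i 0 s₂ s₁ 0 (s₃ + a + b - i) p) +
      (∑ i ∈ Icc 1 b, ((a + b - i - 1).choose (a - 1) : ℝ) *
        wittenSl4RSummand 0 0 s₂ s₁ i (s₃ + a + b - i) p) := by
  obtain ⟨n₁, n₂, n₃⟩ := p
  have exponent {i : ℕ} (hi : i ≤ a + b) : s₃ + a + b - i = s₃ + ((a + b - i : ℕ) : ℝ) := by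
    push_cast [hi]; ring
  have split := wittenSl4RSummand_natCast_exponents a b 0 n₁ n₂ n₃ s₁ s₂ s₃
  rw [Nat.cast_zero, add_zero, pow_zero, mul_one] at split
  rw [split, one_div_pow_mul_pow_eq_sum (by positivity) (by positivity) (by positivity) ha hb,
    add_mul, sum_mul, sum_mul]
  congr 1
  · refine sum_congr rfl fun i hi => ?_
    have h := wittenSl4RSummand_natCast_exponents i 0 (a + b - i) n₁ n₂ n₃ s₁ s₂ s₃
    rw [Nat.cast_zero, pow_zero, mul_one] at h
    rw [exponent (by rw [mem_Icc] at hi; omega), h]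
    ring
  · refine sum_congr rfl fun i hi => ?_
    have h := wittenSl4RSummand_natCast_exponents 0 i (a + b - i) n₁ n₂ n₃ s₁ s₂ s₃
    rw [Nat.cast_zero, pow_zero, one_mul] at h
    rw [exponent (by rw [mem_Icc] at hi; omega), h]
    ring

theorem eq10 (a b : ℕ) (ha : 1 ≤ a) (hb : 1 ≤ b) (s₁ s₂ s₃ : ℝ)
    (h₁ : 2 ≤ s₁) (h₂ : 2 ≤ s₂) (h₃ : 2 ≤ s₃) :
    wittenSl4R a 0 s₂ s₁ b s₃ =
      (∑ i ∈ Finset.Icc 1 a, (Nat.choose (a + b - i - 1) (b - 1) : ℝ) *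
        wittenSl4R i 0 s₂ s₁ 0 (s₃ + a + b - i)) +
      (∑ i ∈ Finset.Icc 1 b, (Nat.choose (a + b - i - 1) (a - 1) : ℝ) *
        wittenSl4R 0 0 s₂ s₁ i (s₃ + a + b - i)) := by
  have hasSum {t₁ t₅ t₆ : ℝ} (ht₁ : 0 ≤ t₁) (ht₅ : 0 ≤ t₅) (ht₆ : 2 ≤ t₆) :
      HasSum (wittenSl4RSummand t₁ 0 s₂ s₁ t₅ t₆) (wittenSl4R t₁ 0 s₂ s₁ t₅ t₆) :=
    hasSum_wittenSl4RSummand (summable_wittenSl4RSummand ht₁ le_rfl h₂ h₁ ht₅ ht₆)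
  have exponent {i : ℕ} (hi : i ≤ a + b) : 2 ≤ s₃ + a + b - i := by
    have : (i : ℝ) ≤ a + b := by exact_mod_cast hi
    linarith
  refine (hasSum a.cast_nonneg b.cast_nonneg h₃).unique ?_
  rw [funext (wittenSl4RSummand_eq_sum ha hb s₁ s₂ s₃)]
  exact (hasSum_sum fun i hi =>
      (hasSum i.cast_nonneg le_rfl (exponent (by have := (mem_Icc.1 hi).2; omega))).mul_left _).add
    (hasSum_sum fun i hi =>
      (hasSum le_rfl i.cast_nonneg (exponent (by have := (mem_Icc.1 hi).2; omega))).mul_left _)
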